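/- The elements b̲_v = P(v) − (♭v)P, for v ∈ V, satisfy b̲_{v₁} b̲_{v₂} b̲_{v₃} + b̲_{v₃} b̲_{v₂} b̲_{v₁} = −g(v₁,v₂) b̲_{v₃} − g(v₃,v₂) b̲_{v₁}. -/
import Mathlib


noncomputable section

open CliffordAlgebra

variable (F : Type*) [Field F] (V : Type*) [AddCommGroup V] [Module F V]

/-- The quadratic form `Q[v ⊕ α] = α v` on `W = V ⊕ V*`. -/
def Qf : QuadraticForm F (V × Module.Dual F V) where
  toFun w := w.2 w.1
  toFun_smul a w := by simp [smul_eq_mul, mul_assoc]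
  exists_companion' :=
    ⟨LinearMap.mk₂ F (fun w w' => w.2 w'.1 + w'.2 w.1)
      (fun m m' n => by simp; ring) (fun c m n => by simp; ring)
      (fun m n n' => by simp; ring) (fun c m n => by simp; ring),
     fun w w' => by simp; ring⟩

/-- Image of a vector `v ∈ V` in the Clifford algebra. -/
def ιv (v : V) : CliffordAlgebra (Qf F V) := ι (Qf F V) (v, 0)

/-- Image of a covector `α ∈ V*` in the Clifford algebra. -/
def ιd (α : Module.Dual F V) : CliffordAlgebra (Qf F V) := ι (Qf F V) ((0 : V), α)

lemma Qf_apply (w : V × Module.Dual F V) : Qf F V w = w.2 w.1 := rfl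

lemma swap (v : V) (α : Module.Dual F V) :
    ιv F V v * ιd F V α + ιd F V α * ιv F V v = algebraMap F _ (α v) := by
  have h := ι_mul_ι_add_swap (Q := Qf F V) (v, 0) (0, α)
  rw [ιv, ιd, h]
  congr 1
  simp [QuadraticMap.polar, Qf_apply]

/-- the elements `b̲_v = P(v) − (♭v)P` satisfy the DKP relation
with the negative metric `g`. -/
theorem stmt13 (g : LinearMap.BilinForm F V)
    (hgsymm : ∀ v w : V, g v w = g w v)
    (P : CliffordAlgebra (Qf F V))
    (hP2 : P * P = P)
    (hPd : ∀ ρ : Module.Dual F V, P * ιd F V ρ = 0)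
    (hvP : ∀ v : V, ιv F V v * P = 0)
    (v₁ v₂ v₃ : V) :
    letI b : V → CliffordAlgebra (Qf F V) :=
      fun v => P * ιv F V v - ιd F V (g v) * P
    b v₁ * b v₂ * b v₃ + b v₃ * b v₂ * b v₁ =
      -(g v₁ v₂) • b v₃ - g v₃ v₂ • b v₁ := by
  simp only []
  have hvP' : ∀ (v : V) (x), ιv F V v * (P * x) = 0 := fun v x => by
    rw [← mul_assoc, hvP, zero_mul]
  have hPd' : ∀ (α) (x), P * (ιd F V α * x) = 0 := fun α x => by
    rw [← mul_assoc, hPd, zero_mul]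
  have hP2' : ∀ x, P * (P * x) = P * x := fun x => by
    rw [← mul_assoc, hP2]
  have swap' : ∀ (v : V) (α : Module.Dual F V) (x),
      ιv F V v * (ιd F V α * x) = α v • x - ιd F V α * (ιv F V v * x) := by
    intro v α x
    have h : ιv F V v * ιd F V α = algebraMap F _ (α v) - ιd F V α * ιv F V v := by
      rw [eq_sub_iff_add_eq, swap]
    rw [← mul_assoc, h, sub_mul, Algebra.smul_def, mul_assoc]
  have key : ∀ v w : V,
      (P * ιv F V v - ιd F V (g v) * P) * (P * ιv F V w - ιd F V (g w) * P) =
        -(g w v) • P - ιd F V (g v) * (P * ιv F V w) := by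
    intro v w
    rw [sub_mul, mul_sub, mul_sub]
    have t1 : P * ιv F V v * (P * ιv F V w) = 0 := by
      rw [mul_assoc, hvP', mul_zero]
    have t2 : P * ιv F V v * (ιd F V (g w) * P) = g w v • P := by
      rw [mul_assoc, swap' v (g w) P, hvP, mul_zero, sub_zero, mul_smul_comm, hP2]
    have t3 : ιd F V (g v) * P * (P * ιv F V w) = ιd F V (g v) * (P * ιv F V w) := by
      rw [mul_assoc, hP2']
    have t4 : ιd F V (g v) * P * (ιd F V (g w) * P) = 0 := by
      rw [mul_assoc, hPd', mul_zero]
    rw [t1, t2, t3, t4, zero_sub, sub_zero, neg_smul]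
  have trip : ∀ a c d : V,
      (P * ιv F V a - ιd F V (g a) * P) * (P * ιv F V c - ιd F V (g c) * P) *
          (P * ιv F V d - ιd F V (g d) * P) =
        -(g c a) • (P * ιv F V d) + g d c • (ιd F V (g a) * P) := by
    intro a c d
    rw [key, sub_mul, mul_sub, mul_sub]
    have tA : -(g c a) • P * (P * ιv F V d) = -(g c a) • (P * ιv F V d) := by
      rw [smul_mul_assoc, hP2']
    have tB : -(g c a) • P * (ιd F V (g d) * P) = 0 := by
      rw [smul_mul_assoc, hPd', smul_zero]
    have tC : ιd F V (g a) * (P * ιv F V c) * (P * ιv F V d) = 0 := by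
      rw [mul_assoc, mul_assoc P, hvP', mul_zero, mul_zero]
    have tD : ιd F V (g a) * (P * ιv F V c) * (ιd F V (g d) * P) =
        g d c • (ιd F V (g a) * P) := by
      rw [mul_assoc, mul_assoc P, swap' c (g d) P, hvP, mul_zero, sub_zero,
        mul_smul_comm, hP2, mul_smul_comm]
    rw [tA, tB, tC, tD, sub_zero, zero_sub, sub_neg_eq_add]
  rw [trip v₁ v₂ v₃, trip v₃ v₂ v₁, hgsymm v₂ v₁, hgsymm v₂ v₃,
    smul_sub, smul_sub]
  module
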